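/- Let (X,d) be a compact metric space and let (X, f_{1,∞}) be a non-autonomous discrete system such that f_{1,∞} is feeble open, each f_n is surjective, (f_n) converges uniformly to a continuous map f : X → X, and the compositions (f_r^k) converge collectively to (f^k). Then f_{1,∞} is weakly mixing if and only if f is weakly mixing. -/

import Mathlib

open Set Filter

/-- `nds f i n` is the `n`-step composition `f_i^n = f (i+n-1) ∘ ⋯ ∘ f i`, with `nds f i 0 = id`. -/
def nds {X : Type*} (f : ℕ → X → X) (i : ℕ) : ℕ → X → X
  | 0 => id
  | n + 1 => f (i + n) ∘ nds f i n

section TopDefs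

variable {X : Type*} [TopologicalSpace X]

/-- The NDS `f_{1,∞}` is (topologically) transitive. -/
def NDSTransitive (f : ℕ → X → X) : Prop :=
  ∀ U V : Set X, IsOpen U → U.Nonempty → IsOpen V → V.Nonempty →
    ∃ n : ℕ, 0 < n ∧ (nds f 1 n '' U ∩ V).Nonempty

/-- The NDS `f_{1,∞}` is mixing. -/
def NDSMixing (f : ℕ → X → X) : Prop :=
  ∀ U V : Set X, IsOpen U → U.Nonempty → IsOpen V → V.Nonempty →
    ∃ N : ℕ, ∀ n : ℕ, N ≤ n → (nds f 1 n '' U ∩ V).Nonempty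

/-- The NDS `f_{1,∞}` is weakly mixing. -/
def NDSWeaklyMixing (f : ℕ → X → X) : Prop :=
  ∀ U₁ U₂ V₁ V₂ : Set X, IsOpen U₁ → U₁.Nonempty → IsOpen U₂ → U₂.Nonempty →
    IsOpen V₁ → V₁.Nonempty → IsOpen V₂ → V₂.Nonempty →
    ∃ n : ℕ, 0 < n ∧ (nds f 1 n '' U₁ ∩ V₁).Nonempty ∧ (nds f 1 n '' U₂ ∩ V₂).Nonempty

/-- The NDS `f_{1,∞}` is multi-transitive. -/
def NDSMultiTransitive (f : ℕ → X → X) : Prop :=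
  ∀ m : ℕ, 0 < m → ∀ U V : Fin m → Set X,
    (∀ j, IsOpen (U j)) → (∀ j, (U j).Nonempty) →
    (∀ j, IsOpen (V j)) → (∀ j, (V j).Nonempty) →
    ∃ l : ℕ, 0 < l ∧ ∀ j : Fin m, (nds f 1 (l * (j.1 + 1)) '' U j ∩ V j).Nonempty

/-- The NDS `f_{1,∞}` is totally transitive. -/
def NDSTotallyTransitive (f : ℕ → X → X) : Prop :=
  ∀ k : ℕ, 0 < k → ∀ U V : Set X, IsOpen U → U.Nonempty → IsOpen V → V.Nonempty →
    ∃ n : ℕ, 0 < n ∧ (nds f 1 (n * k) '' U ∩ V).Nonempty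

/-- The NDS `f_{1,∞}` is minimal: every orbit is dense. -/
def NDSMinimal (f : ℕ → X → X) : Prop :=
  ∀ x : X, Dense (Set.range fun n : ℕ => nds f 1 n x)

/-- The NDS `f_{1,∞}` is feeble open. -/
def FeebleOpen (f : ℕ → X → X) : Prop :=
  ∀ i : ℕ, 1 ≤ i → ∀ U : Set X, IsOpen U → U.Nonempty → (interior (f i '' U)).Nonempty

/-- A set of positive integers is syndetic (has bounded gaps). -/
def SyndeticSet (A : Set ℕ) : Prop :=
  ∃ M : ℕ, ∀ i : ℕ, 1 ≤ i → ∃ j ∈ A, i ≤ j ∧ j ≤ i + M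

/-- A set of positive integers is thick (contains arbitrarily long runs). -/
def ThickSet (A : Set ℕ) : Prop :=
  ∀ p : ℕ, ∃ n : ℕ, ∀ j : ℕ, n ≤ j → j ≤ n + p → j ∈ A

/-- The NDS `f_{1,∞}` is syndetically transitive. -/
def NDSSyndeticallyTransitive (f : ℕ → X → X) : Prop :=
  ∀ U V : Set X, IsOpen U → U.Nonempty → IsOpen V → V.Nonempty →
    SyndeticSet {n : ℕ | 0 < n ∧ (nds f 1 n '' U ∩ V).Nonempty}

/-- The NDS `f_{1,∞}` has dense periodic points. -/
def NDSDensePeriodicPoints (f : ℕ → X → X) : Prop :=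
  Dense {x : X | ∃ k : ℕ, 0 < k ∧ ∀ n : ℕ, 0 < n → nds f 1 (k * n) x = x}

/-- The NDS `f_{k,∞}` is strongly transitive. -/
def NDSStronglyTransitiveFrom (f : ℕ → X → X) (k : ℕ) : Prop :=
  ∀ U : Set X, IsOpen U → U.Nonempty →
    ∃ M : ℕ, 0 < M ∧ (⋃ i ∈ Set.Icc 1 M, nds f k i '' U) = Set.univ

/-- An autonomous map is transitive. -/
def MapTransitive {Y : Type*} [TopologicalSpace Y] (g : Y → Y) : Prop :=
  ∀ U V : Set Y, IsOpen U → U.Nonempty → IsOpen V → V.Nonempty →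
    ∃ n : ℕ, 0 < n ∧ (g^[n] '' U ∩ V).Nonempty

/-- An autonomous map is weakly mixing. -/
def MapWeaklyMixing {Y : Type*} [TopologicalSpace Y] (g : Y → Y) : Prop :=
  ∀ U₁ U₂ V₁ V₂ : Set Y, IsOpen U₁ → U₁.Nonempty → IsOpen U₂ → U₂.Nonempty →
    IsOpen V₁ → V₁.Nonempty → IsOpen V₂ → V₂.Nonempty →
    ∃ n : ℕ, 0 < n ∧ (g^[n] '' U₁ ∩ V₁).Nonempty ∧ (g^[n] '' U₂ ∩ V₂).Nonempty

/-- An autonomous map is totally transitive. -/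
def MapTotallyTransitive {Y : Type*} [TopologicalSpace Y] (g : Y → Y) : Prop :=
  ∀ k : ℕ, 0 < k → ∀ U V : Set Y, IsOpen U → U.Nonempty → IsOpen V → V.Nonempty →
    ∃ n : ℕ, 0 < n ∧ (g^[n * k] '' U ∩ V).Nonempty

/-- An autonomous map is syndetically transitive. -/
def MapSyndeticallyTransitive {Y : Type*} [TopologicalSpace Y] (g : Y → Y) : Prop :=
  ∀ U V : Set Y, IsOpen U → U.Nonempty → IsOpen V → V.Nonempty →
    SyndeticSet {n : ℕ | 0 < n ∧ (g^[n] '' U ∩ V).Nonempty}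

/-- An autonomous map is minimal. -/
def MapMinimal {Y : Type*} [TopologicalSpace Y] (g : Y → Y) : Prop :=
  ∀ x : Y, Dense (Set.range fun n : ℕ => g^[n] x)

end TopDefs

section MetricDefs

variable {X : Type*} [MetricSpace X]

/-- The compositions `(f_r^k)` converge collectively to `(f^k)` (w.r.t. the supremum metric). -/
def CollectivelyConverges (f : ℕ → X → X) (g : X → X) : Prop :=
  ∀ ε : ℝ, 0 < ε → ∃ r₀ : ℕ, ∀ r : ℕ, r₀ ≤ r → ∀ k : ℕ, 1 ≤ k → ∀ x : X,
    dist (nds f r k x) (g^[k] x) < ε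

/-- `N(U, δ)`: the times at which the NDS is `δ`-sensitive on `U`. -/
def SensSet (f : ℕ → X → X) (U : Set X) (δ : ℝ) : Set ℕ :=
  {n : ℕ | 0 < n ∧ ∃ x ∈ U, ∃ y ∈ U, δ < dist (nds f 1 n x) (nds f 1 n y)}

/-- The NDS `f_{1,∞}` is multi-sensitive. -/
def NDSMultiSensitive (f : ℕ → X → X) : Prop :=
  ∃ δ : ℝ, 0 < δ ∧ ∀ m : ℕ, 0 < m → ∀ U : Fin m → Set X,
    (∀ i, IsOpen (U i)) → (∀ i, (U i).Nonempty) → (⋂ i, SensSet f (U i) δ).Nonempty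

/-- The NDS `f_{1,∞}` is thickly sensitive. -/
def NDSThicklySensitive (f : ℕ → X → X) : Prop :=
  ∃ δ : ℝ, 0 < δ ∧ ∀ U : Set X, IsOpen U → U.Nonempty → ThickSet (SensSet f U δ)

/-- The NDS `f_{1,∞}` is syndetically sensitive. -/
def NDSSyndeticallySensitive (f : ℕ → X → X) : Prop :=
  ∃ δ : ℝ, 0 < δ ∧ ∀ U : Set X, IsOpen U → U.Nonempty → SyndeticSet (SensSet f U δ)

/-- The NDS `f_{1,∞}` is mildly mixing: its product with every transitive NDS on a compact
metric space is transitive. -/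
def NDSMildlyMixing (f : ℕ → X → X) : Prop :=
  ∀ (Y : Type*) [MetricSpace Y] [CompactSpace Y] (g : ℕ → Y → Y),
    (∀ n : ℕ, 1 ≤ n → Continuous (g n)) → NDSTransitive g →
    NDSTransitive (fun n (p : X × Y) => (f n p.1, g n p.2))

/-- The NDS `f_{1,∞}` is Li–Yorke chaotic. -/
def LiYorkeChaotic (f : ℕ → X → X) : Prop :=
  ∃ S : Set X, ¬S.Countable ∧ ∀ x ∈ S, ∀ y ∈ S, x ≠ y →
    Filter.liminf (fun n : ℕ => dist (nds f 1 n x) (nds f 1 n y)) Filter.atTop = 0 ∧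
    0 < Filter.limsup (fun n : ℕ => dist (nds f 1 n x) (nds f 1 n y)) Filter.atTop

end MetricDefs

/-!
Once `m` is large, collective convergence makes `f_{m+1}^k` uniformly `ε/2`-close to `F^k` for
all `k ≥ 1`, and `f_1^{m+k} = f_{m+1}^k ∘ f_1^m`. Hence a hit of `F^k` from the open set
`int f_1^m(U)` (nonempty by feeble openness) into `B(v, ε/2)` is a hit of `f_1^{m+k}` from `U` into
`B(v, ε)`, and a hit of `f_1^n`, `n > m`, from `f_1^{-m}(U)` (nonempty by surjectivity) into
`B(v, ε/2)` is a hit of `F^{n-m}` from `U` into `B(v, ε)`. Hits at times `n > m` exist because a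
weakly mixing system on a nontrivial Hausdorff space has no isolated points, so a hit can be
kept away from the finitely many points `f_1^n(a)`, `n ≤ m`.
-/

section Nds

variable {X : Type*}

lemma nds_add (f : ℕ → X → X) (i a b : ℕ) (x : X) :
    nds f i (a + b) x = nds f (i + a) b (nds f i a x) := by
  induction b with
  | zero => rfl
  | succ b ih =>
    change f (i + (a + b)) (nds f i (a + b) x) = f (i + a + b) _
    rw [ih, Nat.add_assoc]

lemma continuous_nds [TopologicalSpace X] {f : ℕ → X → X} {i : ℕ}
    (hcont : ∀ n, i ≤ n → Continuous (f n)) (n : ℕ) : Continuous (nds f i n) := by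
  induction n with
  | zero => exact continuous_id
  | succ n ih => exact (hcont (i + n) (Nat.le_add_right i n)).comp ih

lemma surjective_nds {f : ℕ → X → X} {i : ℕ}
    (hsurj : ∀ n, i ≤ n → Function.Surjective (f n)) (n : ℕ) :
    Function.Surjective (nds f i n) := by
  induction n with
  | zero => exact Function.surjective_id
  | succ n ih => exact (hsurj (i + n) (Nat.le_add_right i n)).comp ih

lemma FeebleOpen.interior_image_nds_nonempty [TopologicalSpace X] {f : ℕ → X → X}
    (hfo : FeebleOpen f) {i : ℕ} (hi : 1 ≤ i) (n : ℕ) {U : Set X} (hU : IsOpen U)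
    (hUne : U.Nonempty) : (interior (nds f i n '' U)).Nonempty := by
  induction n with
  | zero => simpa [nds, hU.interior_eq] using hUne
  | succ n ih =>
    have hsub : f (i + n) '' interior (nds f i n '' U) ⊆ nds f i (n + 1) '' U := by
      rw [nds, image_comp]
      exact image_mono interior_subset
    exact (hfo (i + n) (by omega) _ isOpen_interior ih).mono (interior_mono hsub)

lemma CollectivelyConverges.eventually_dist_nds_add_lt [MetricSpace X] {f : ℕ → X → X}
    {F : X → X} (hcoll : CollectivelyConverges f F) {ε : ℝ} (hε : 0 < ε) :
    ∀ᶠ m in atTop, ∀ k, 1 ≤ k → ∀ x, dist (nds f 1 (m + k) x) (F^[k] (nds f 1 m x)) < ε := by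
  obtain ⟨r₀, hr₀⟩ := hcoll ε hε
  filter_upwards [eventually_ge_atTop r₀] with m hm k hk x
  rw [nds_add]
  exact hr₀ (1 + m) (by omega) k hk _

end Nds

section WeaklyMixingAlong

open Topology

variable {X : Type*}

/-- Both `NDSWeaklyMixing f` (with `φ = nds f 1`) and `MapWeaklyMixing F` (with `φ n = F^[n]`)
unfold to this. -/
def WeaklyMixingAlong [TopologicalSpace X] (φ : ℕ → X → X) : Prop :=
  ∀ U₁ U₂ V₁ V₂ : Set X, IsOpen U₁ → U₁.Nonempty → IsOpen U₂ → U₂.Nonempty →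
    IsOpen V₁ → V₁.Nonempty → IsOpen V₂ → V₂.Nonempty →
    ∃ n : ℕ, 0 < n ∧ (φ n '' U₁ ∩ V₁).Nonempty ∧ (φ n '' U₂ ∩ V₂).Nonempty

lemma weaklyMixingAlong_of_forall_dist_lt [PseudoMetricSpace X] {φ : ℕ → X → X}
    (h : ∀ U₁ U₂ : Set X, IsOpen U₁ → U₁.Nonempty → IsOpen U₂ → U₂.Nonempty →
      ∀ v₁ v₂ : X, ∀ ε > 0, ∃ n : ℕ, 0 < n ∧
        (∃ x ∈ U₁, dist (φ n x) v₁ < ε) ∧ (∃ x ∈ U₂, dist (φ n x) v₂ < ε)) :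
    WeaklyMixingAlong φ := by
  intro U₁ U₂ V₁ V₂ hU₁ hU₁ne hU₂ hU₂ne hV₁ ⟨v₁, hv₁⟩ hV₂ ⟨v₂, hv₂⟩
  obtain ⟨ε₁, hε₁, hball₁⟩ := Metric.isOpen_iff.mp hV₁ v₁ hv₁
  obtain ⟨ε₂, hε₂, hball₂⟩ := Metric.isOpen_iff.mp hV₂ v₂ hv₂
  obtain ⟨n, hn, ⟨x₁, hx₁, hd₁⟩, ⟨x₂, hx₂, hd₂⟩⟩ :=
    h U₁ U₂ hU₁ hU₁ne hU₂ hU₂ne v₁ v₂ (min ε₁ ε₂) (lt_min hε₁ hε₂)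
  exact ⟨n, hn, ⟨φ n x₁, mem_image_of_mem _ hx₁, hball₁ (hd₁.trans_le (min_le_left _ _))⟩,
    ⟨φ n x₂, mem_image_of_mem _ hx₂, hball₂ (hd₂.trans_le (min_le_right _ _))⟩⟩

variable [TopologicalSpace X] {φ : ℕ → X → X}

lemma WeaklyMixingAlong.nhdsNE_neBot [T1Space X] [Nontrivial X] (h : WeaklyMixingAlong φ)
    (p : X) : (𝓝[≠] p).NeBot := by
  rw [neBot_iff, Ne, ← isOpen_singleton_iff_punctured_nhds]
  intro hp
  obtain ⟨n, -, ⟨-, ⟨p, rfl, rfl⟩, hfix⟩, ⟨-, ⟨p, rfl, rfl⟩, hmove⟩⟩ :=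
    h {p} {p} {p} {p}ᶜ hp (singleton_nonempty p) hp (singleton_nonempty p) hp
      (singleton_nonempty p) isOpen_compl_singleton (exists_ne p)
  exact hmove hfix

lemma WeaklyMixingAlong.exists_gt [T2Space X] (h : WeaklyMixingAlong φ)
    (hφ : ∀ n, Continuous (φ n)) (N : ℕ) {U₁ U₂ V₁ V₂ : Set X} (hU₁ : IsOpen U₁)
    (hU₁ne : U₁.Nonempty) (hU₂ : IsOpen U₂) (hU₂ne : U₂.Nonempty) (hV₁ : IsOpen V₁)
    (hV₁ne : V₁.Nonempty) (hV₂ : IsOpen V₂) (hV₂ne : V₂.Nonempty) :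
    ∃ n, N < n ∧ (φ n '' U₁ ∩ V₁).Nonempty ∧ (φ n '' U₂ ∩ V₂).Nonempty := by
  rcases subsingleton_or_nontrivial X with hX | hX
  · have hit : ∀ {U V : Set X}, U.Nonempty → V.Nonempty → (φ (N + 1) '' U ∩ V).Nonempty :=
      fun ⟨u, hu⟩ ⟨v, hv⟩ => ⟨v, Subsingleton.elim (φ (N + 1) u) v ▸ mem_image_of_mem _ hu, hv⟩
    exact ⟨N + 1, N.lt_succ_self, hit hU₁ne hV₁ne, hit hU₂ne hV₂ne⟩
  obtain ⟨a, ha⟩ := hU₁ne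
  obtain ⟨v, hv⟩ := hV₁ne
  have hS : ((fun n => φ n a) '' Iic N).Finite := (finite_Iic N).image _
  have := WeaklyMixingAlong.nhdsNE_neBot h
  obtain ⟨b, hbV, hbS⟩ := ((infinite_of_mem_nhds v (hV₁.mem_nhds hv)).sdiff hS).nonempty
  obtain ⟨O, P, hO, hP, hSO, hbP, hOP⟩ :=
    SeparatedNhds.of_finite hS (finite_singleton b) (disjoint_singleton_right.mpr hbS)
  obtain ⟨n, -, ⟨-, ⟨x, hx, rfl⟩, hxV, hxP⟩, hit₂⟩ :=
    h (U₁ ∩ ⋂ m ∈ Iic N, φ m ⁻¹' O) U₂ (V₁ ∩ P) V₂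
      (hU₁.inter ((finite_Iic N).isOpen_biInter fun m _ => hO.preimage (hφ m)))
      ⟨a, ha, mem_iInter₂.mpr fun m hm => hSO (mem_image_of_mem _ hm)⟩ hU₂ hU₂ne
      (hV₁.inter hP) ⟨b, hbV, hbP (mem_singleton b)⟩ hV₂ hV₂ne
  refine ⟨n, lt_of_not_ge fun hn => ?_, ⟨φ n x, mem_image_of_mem _ hx.1, hxV⟩, hit₂⟩
  exact hOP.ne_of_mem (mem_iInter₂.mp hx.2 n hn) hxP rfl

end WeaklyMixingAlong

section Transfer

variable {X : Type*} [MetricSpace X] {f : ℕ → X → X} {F : X → X}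

lemma NDSWeaklyMixing.mapWeaklyMixing (hcont : ∀ n, 1 ≤ n → Continuous (f n))
    (hsurj : ∀ n, 1 ≤ n → Function.Surjective (f n)) (hcoll : CollectivelyConverges f F)
    (hwm : NDSWeaklyMixing f) : MapWeaklyMixing F := by
  refine weaklyMixingAlong_of_forall_dist_lt fun U₁ U₂ hU₁ hU₁ne hU₂ hU₂ne v₁ v₂ ε hε => ?_
  obtain ⟨m, hm⟩ := (hcoll.eventually_dist_nds_add_lt (half_pos hε)).exists
  have hpre : ∀ {U : Set X}, IsOpen U → U.Nonempty →
      IsOpen (nds f 1 m ⁻¹' U) ∧ (nds f 1 m ⁻¹' U).Nonempty := fun hU hUne =>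
    ⟨hU.preimage (continuous_nds hcont m), hUne.preimage (surjective_nds hsurj m)⟩
  obtain ⟨n, hmn, ⟨-, ⟨x₁, hx₁, rfl⟩, hd₁⟩, ⟨-, ⟨x₂, hx₂, rfl⟩, hd₂⟩⟩ :=
    WeaklyMixingAlong.exists_gt hwm (continuous_nds hcont) m (hpre hU₁ hU₁ne).1
      (hpre hU₁ hU₁ne).2 (hpre hU₂ hU₂ne).1 (hpre hU₂ hU₂ne).2 Metric.isOpen_ball
      (Metric.nonempty_ball.mpr (half_pos hε)) Metric.isOpen_ball
      (Metric.nonempty_ball.mpr (half_pos hε))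
  obtain ⟨k, rfl⟩ := Nat.exists_eq_add_of_lt hmn
  have hclose : ∀ x v, dist (nds f 1 (m + (k + 1)) x) v < ε / 2 →
      dist (F^[k + 1] (nds f 1 m x)) v < ε := fun x v hd =>
    calc dist (F^[k + 1] (nds f 1 m x)) v
        ≤ dist (F^[k + 1] (nds f 1 m x)) (nds f 1 (m + (k + 1)) x)
          + dist (nds f 1 (m + (k + 1)) x) v := dist_triangle _ _ _
      _ < ε / 2 + ε / 2 := by rw [dist_comm]; exact add_lt_add (hm _ (by omega) x) hd
      _ = ε := add_halves ε
  exact ⟨k + 1, k.succ_pos, ⟨_, hx₁, hclose x₁ v₁ hd₁⟩, ⟨_, hx₂, hclose x₂ v₂ hd₂⟩⟩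

lemma MapWeaklyMixing.ndsWeaklyMixing (hfo : FeebleOpen f) (hcoll : CollectivelyConverges f F)
    (hwm : MapWeaklyMixing F) : NDSWeaklyMixing f := by
  refine weaklyMixingAlong_of_forall_dist_lt fun U₁ U₂ hU₁ hU₁ne hU₂ hU₂ne v₁ v₂ ε hε => ?_
  obtain ⟨m, hm⟩ := (hcoll.eventually_dist_nds_add_lt (half_pos hε)).exists
  obtain ⟨k, hk, ⟨-, ⟨w₁, hw₁, rfl⟩, hd₁⟩, ⟨-, ⟨w₂, hw₂, rfl⟩, hd₂⟩⟩ :=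
    hwm _ _ _ _ isOpen_interior (hfo.interior_image_nds_nonempty le_rfl m hU₁ hU₁ne)
      isOpen_interior (hfo.interior_image_nds_nonempty le_rfl m hU₂ hU₂ne) Metric.isOpen_ball
      (Metric.nonempty_ball.mpr (half_pos hε)) Metric.isOpen_ball
      (Metric.nonempty_ball.mpr (half_pos hε))
  obtain ⟨x₁, hx₁, rfl⟩ := interior_subset hw₁
  obtain ⟨x₂, hx₂, rfl⟩ := interior_subset hw₂
  have hclose : ∀ x v, dist (F^[k] (nds f 1 m x)) v < ε / 2 →
      dist (nds f 1 (m + k) x) v < ε := fun x v hd =>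
    calc dist (nds f 1 (m + k) x) v
        ≤ dist (nds f 1 (m + k) x) (F^[k] (nds f 1 m x)) + dist (F^[k] (nds f 1 m x)) v :=
          dist_triangle _ _ _
      _ < ε / 2 + ε / 2 := add_lt_add (hm k hk x) hd
      _ = ε := add_halves ε
  exact ⟨m + k, by omega, ⟨x₁, hx₁, hclose x₁ v₁ hd₁⟩, ⟨x₂, hx₂, hclose x₂ v₂ hd₂⟩⟩

end Transfer

theorem weaklyMixing_iff_limit_weaklyMixing_general {X : Type*} [MetricSpace X]
    (f : ℕ → X → X) (F : X → X)
    (hcont : ∀ n : ℕ, 1 ≤ n → Continuous (f n))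
    (hfo : FeebleOpen f)
    (hsurj : ∀ n : ℕ, 1 ≤ n → Function.Surjective (f n))
    (hcoll : CollectivelyConverges f F) :
    NDSWeaklyMixing f ↔ MapWeaklyMixing F :=
  ⟨fun hwm => hwm.mapWeaklyMixing hcont hsurj hcoll, fun hwm => hwm.ndsWeaklyMixing hfo hcoll⟩

theorem weaklyMixing_iff_limit_weaklyMixing {X : Type*} [MetricSpace X] [CompactSpace X]
    (f : ℕ → X → X) (F : X → X)
    (hcont : ∀ n : ℕ, 1 ≤ n → Continuous (f n))
    (hfo : FeebleOpen f)
    (hsurj : ∀ n : ℕ, 1 ≤ n → Function.Surjective (f n))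
    (hF : Continuous F)
    (hunif : TendstoUniformly (fun n x => f n x) F Filter.atTop)
    (hcoll : CollectivelyConverges f F) :
    NDSWeaklyMixing f ↔ MapWeaklyMixing F :=
  weaklyMixing_iff_limit_weaklyMixing_general f F hcont hfo hsurj hcoll
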